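/- arXiv:2405.15424 — 2 statements merged into one kernel-verified Lean document; each statement's English description precedes it below -/
import Mathlib

section
/- For any probability measure μ on X, hypothesis class H ⊆ Y^X, and ε > 0, the covering number with respect to the population metric d_μ is bounded by the supremum over m of the expected empirical covering number at scale ε/2: N(ε, H, d_μ) ≤ sup_{m∈ℕ} E_{x₁,…,x_m ∼ μ^m}[ N(ε/2, H, d_{μ̂_m}) ]. -/
/-!
A maximal `ε`-separated subset of `H` for `d_μ` is an `ε`-cover, so the covering number is at most
the packing number, and it suffices to bound `|P|` for every finite `ε`-separated `P ⊆ H`.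
By Chebyshev's inequality and a union bound over the finitely many pairs of `P`, with probability
tending to `1` as `m → ∞` a sample of size `m` keeps `P` `ε`-separated for the empirical metric;
on that event every `ε/2`-cover has at least `|P|` points. Hence
`|P| · P(event) ≤ E[N(ε/2, H, d_{μ̂_m})]`, and letting `m → ∞` gives the bound.
-/

open MeasureTheory ENNReal

noncomputable def coverNum {G : Type*} (d : G → G → ℝ) (ε : ℝ) (A : Set G) : ℕ∞ :=
  sInf {n : ℕ∞ | ∃ C : Set G, C ⊆ A ∧ (∀ g ∈ A, ∃ g' ∈ C, d g g' ≤ ε) ∧ C.encard = n}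

/-- The empirical (normalized Hamming) metric induced by a sample `ω : Fin m → X`. -/
noncomputable def empDistSeq {X Y : Type*} [DecidableEq Y] {m : ℕ} (ω : Fin m → X)
    (f g : X → Y) : ℝ :=
  (∑ t, if f (ω t) ≠ g (ω t) then (1 : ℝ) else 0) / m

open ProbabilityTheory Filter Topology

noncomputable def packNum {G : Type*} (d : G → G → ℝ) (ε : ℝ) (A : Set G) : ℕ∞ :=
  ⨆ P : {P : Finset G // ↑P ⊆ A ∧ (P : Set G).Pairwise fun a b => ε < d a b}, (P.1.card : ℕ∞)

section Packing

variable {G : Type*} {d : G → G → ℝ} {ε : ℝ} {A : Set G}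

lemma coverNum_le_card {P : Finset G} (hPA : ↑P ⊆ A) (hcover : ∀ g ∈ A, ∃ p ∈ P, d g p ≤ ε) :
    coverNum d ε A ≤ P.card :=
  sInf_le ⟨P, hPA, hcover, Set.encard_coe_eq_coe_finsetCard P⟩

-- Distinct points of `P` are more than `ε' + ε'` apart, so they cannot share a centre of an
-- `ε'`-cover.
lemma card_le_coverNum_of_pairwise_lt (hsymm : ∀ a b, d a b = d b a)
    (htri : ∀ a b c, d a c ≤ d a b + d b c) {ε' : ℝ} (hε' : ε' + ε' ≤ ε) {P : Finset G}
    (hPA : ↑P ⊆ A) (hP : (P : Set G).Pairwise fun a b => ε < d a b) :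
    (P.card : ℕ∞) ≤ coverNum d ε' A := by
  refine le_sInf ?_
  rintro _ ⟨C, -, hcover, rfl⟩
  choose φ hφC hφd using fun p : P => hcover p (hPA p.2)
  have hφ : Function.Injective φ := by
    intro p q hpq
    by_contra hne
    have hclose : d p q ≤ ε' + ε' :=
      (htri p (φ p) q).trans (add_le_add (hφd p) (by rw [hsymm, hpq]; exact hφd q))
    exact (hP p.2 q.2 (Subtype.coe_injective.ne hne)).not_ge (hclose.trans hε')
  calc (P.card : ℕ∞) = (Set.univ : Set P).encard := by simp
    _ = (φ '' Set.univ).encard := (hφ.injOn.encard_image).symm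
    _ ≤ C.encard := Set.encard_le_encard (Set.image_subset_iff.mpr fun p _ => hφC p)

lemma exists_dist_le_of_card_maximal (hself : ∀ a, d a a ≤ ε) (hsymm : ∀ a b, d a b = d b a)
    {P : Finset G} (hPA : ↑P ⊆ A) (hP : (P : Set G).Pairwise fun a b => ε < d a b)
    (hmax : ∀ Q : Finset G, ↑Q ⊆ A → (Q : Set G).Pairwise (fun a b => ε < d a b) →
      Q.card ≤ P.card)
    {g : G} (hg : g ∈ A) : ∃ p ∈ P, d g p ≤ ε := by
  classical
  by_contra! hfar
  have hgP : g ∉ P := fun hgP => (hfar g hgP).not_ge (hself g)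
  have := hmax (insert g P) (by simpa using Set.insert_subset hg hPA) <| by
    rw [Finset.coe_insert, Set.pairwise_insert_of_notMem hgP]
    exact ⟨hP, fun p hp => ⟨hfar p hp, hsymm g p ▸ hfar p hp⟩⟩
  simp [Finset.card_insert_of_notMem hgP] at this

lemma coverNum_le_packNum (hself : ∀ a, d a a ≤ ε) (hsymm : ∀ a b, d a b = d b a) :
    coverNum d ε A ≤ packNum d ε A := by
  rcases eq_top_or_lt_top (packNum d ε A) with htop | hlt
  · exact htop ▸ le_top
  have : Nonempty {P : Finset G // ↑P ⊆ A ∧ (P : Set G).Pairwise fun a b => ε < d a b} :=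
    ⟨⟨∅, by simp, by simp⟩⟩
  obtain ⟨⟨P, hPA, hP⟩, hPmax⟩ := ENat.exists_eq_iSup_of_lt_top hlt
  have hmax : ∀ Q : Finset G, ↑Q ⊆ A → (Q : Set G).Pairwise (fun a b => ε < d a b) →
      Q.card ≤ P.card := fun Q hQA hQ => by
    have : (Q.card : ℕ∞) ≤ packNum d ε A := le_iSup_of_le ⟨Q, hQA, hQ⟩ le_rfl
    exact_mod_cast this.trans hPmax.ge
  rw [packNum, ← hPmax]
  exact coverNum_le_card hPA fun g hg => exists_dist_le_of_card_maximal hself hsymm hPA hP hmax hg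

end Packing

section EmpiricalMetric

variable {X Y : Type*} [DecidableEq Y] {m : ℕ}

lemma empDistSeq_eq_mean_indicator (ω : Fin m → X) (f g : X → Y) :
    empDistSeq ω f g = (∑ t, {x | f x ≠ g x}.indicator 1 (ω t)) / m := by
  simp [empDistSeq, Set.indicator_apply]

lemma empDistSeq_comm (ω : Fin m → X) (f g : X → Y) : empDistSeq ω f g = empDistSeq ω g f := by
  simp only [empDistSeq, ne_comm]

lemma empDistSeq_triangle (ω : Fin m → X) (f g h : X → Y) :
    empDistSeq ω f h ≤ empDistSeq ω f g + empDistSeq ω g h := by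
  rw [empDistSeq, empDistSeq, empDistSeq, ← add_div, ← Finset.sum_add_distrib]
  gcongr with t
  split_ifs <;> simp_all

lemma measurable_empDistSeq [MeasurableSpace X] {f g : X → Y}
    (hfg : MeasurableSet {x | f x ≠ g x}) :
    Measurable fun ω : Fin m → X => empDistSeq ω f g := by
  simp_rw [empDistSeq_eq_mean_indicator]
  exact (Finset.measurable_sum _ fun t _ =>
    (measurable_one.indicator hfg).comp (measurable_pi_apply t)).div_const _

end EmpiricalMetric

section WeakLaw

variable {X : Type*} [MeasurableSpace X] (μ : Measure X) [IsProbabilityMeasure μ]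
  {A : Set X} {ε : ℝ}

lemma variance_indicator_one_le (hA : MeasurableSet A) : Var[A.indicator 1; μ] ≤ 1 := by
  have hbdd : ∀ᵐ x ∂μ, A.indicator (1 : X → ℝ) x ∈ Set.Icc 0 1 :=
    ae_of_all _ fun x => by by_cases hx : x ∈ A <;> simp [hx]
  have hmean : μ[A.indicator 1] = μ.real A := integral_indicator_one hA
  calc Var[A.indicator 1; μ] ≤ (1 - μ[A.indicator 1]) * (μ[A.indicator 1] - 0) :=
        variance_le_sub_mul_sub hbdd (measurable_one.indicator hA).aemeasurable
    _ ≤ 1 := by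
        rw [hmean]
        nlinarith [measureReal_nonneg (μ := μ) (s := A), measureReal_le_one (μ := μ) (s := A)]

lemma measure_pi_mean_indicator_le_le (hA : MeasurableSet A) (hε : ε < μ.real A) {m : ℕ}
    (hm : 0 < m) :
    Measure.pi (fun _ : Fin m => μ) {ω | (∑ t, A.indicator 1 (ω t)) / m ≤ ε} ≤
      ENNReal.ofReal (1 / (m * (μ.real A - ε) ^ 2)) := by
  set S : (Fin m → X) → ℝ := ∑ t : Fin m, fun ω => A.indicator 1 (ω t) with hS
  have hmem : MemLp (A.indicator (1 : X → ℝ)) 2 μ :=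
    memLp_of_bounded (a := 0) (b := 1) (ae_of_all _ fun x => by
      by_cases hx : x ∈ A <;> simp [hx]) (measurable_one.indicator hA).aestronglyMeasurable 2
  have hSmem : MemLp S 2 (Measure.pi fun _ : Fin m => μ) :=
    memLp_finsetSum' _ fun t _ => hmem.comp_measurePreserving (measurePreserving_eval _ t)
  have hSmean : (Measure.pi fun _ : Fin m => μ)[S] = m * μ.real A := by
    simp only [hS, Finset.sum_apply]
    rw [integral_finsetSum _ fun t _ => integrable_comp_eval (hmem.integrable one_le_two)]
    simp [integral_comp_eval (μ := fun _ => μ) hmem.aestronglyMeasurable,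
      integral_indicator_one hA]
  have hSvar : Var[S; Measure.pi fun _ : Fin m => μ] ≤ m := by
    rw [hS, variance_sum_pi fun _ => hmem]
    calc ∑ _t : Fin m, Var[A.indicator 1; μ] ≤ ∑ _t : Fin m, 1 :=
          Finset.sum_le_sum fun _ _ => variance_indicator_one_le μ hA
      _ = m := by simp
  have hm' : (0 : ℝ) < m := Nat.cast_pos.mpr hm
  have hδ : 0 < m * (μ.real A - ε) := mul_pos hm' (sub_pos.mpr hε)
  calc _ ≤ Measure.pi (fun _ : Fin m => μ)
        {ω | m * (μ.real A - ε) ≤ |S ω - (Measure.pi fun _ : Fin m => μ)[S]|} := by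
        refine measure_mono fun ω hω => ?_
        rw [Set.mem_ofPred_eq, hSmean]
        simp only [Set.mem_ofPred_eq, div_le_iff₀ hm', hS, Finset.sum_apply] at hω ⊢
        rw [abs_sub_comm]
        exact le_abs.mpr (Or.inl (by linarith))
    _ ≤ ENNReal.ofReal (Var[S; Measure.pi fun _ : Fin m => μ] / (m * (μ.real A - ε)) ^ 2) :=
        meas_ge_le_variance_div_sq hSmem hδ
    _ ≤ ENNReal.ofReal (1 / (m * (μ.real A - ε) ^ 2)) := by
        refine ENNReal.ofReal_le_ofReal ?_
        calc _ ≤ (m : ℝ) / (m * (μ.real A - ε)) ^ 2 := by gcongr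
          _ = _ := by field_simp

lemma tendsto_measure_pi_mean_indicator_le (hA : MeasurableSet A) (hε : ε < μ.real A) :
    Tendsto (fun m : ℕ => Measure.pi (fun _ : Fin m => μ)
      {ω | (∑ t, A.indicator 1 (ω t)) / m ≤ ε}) atTop (𝓝 0) := by
  have hbound : Tendsto (fun m : ℕ => ENNReal.ofReal (1 / (m * (μ.real A - ε) ^ 2)))
      atTop (𝓝 0) := by
    rw [← ENNReal.ofReal_zero]
    refine ENNReal.tendsto_ofReal ?_
    simpa [one_div, mul_inv] using
      (tendsto_inv_atTop_zero.comp tendsto_natCast_atTop_atTop).const_mul ((μ.real A - ε) ^ 2)⁻¹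
  refine tendsto_of_tendsto_of_tendsto_of_le_of_le' tendsto_const_nhds hbound
    (Eventually.of_forall fun _ => zero_le) ?_
  filter_upwards [eventually_gt_atTop 0] with m hm
  exact measure_pi_mean_indicator_le_le μ hA hε hm

end WeakLaw

section EmpiricalCovering

variable {X Y : Type*} [MeasurableSpace X] [DecidableEq Y] (μ : Measure X)
  {H : Set (X → Y)} {ε : ℝ} {P : Finset (X → Y)}

lemma measurableSet_biUnion_empDistSeq_le
    (hmeas : ∀ p ∈ P, ∀ q ∈ P, MeasurableSet {x | p x ≠ q x}) (m : ℕ) :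
    MeasurableSet (⋃ pq ∈ P.offDiag, {ω : Fin m → X | empDistSeq ω pq.1 pq.2 ≤ ε}) :=
  Finset.measurableSet_biUnion _ fun _ hpq =>
    have ⟨hp, hq, _⟩ := Finset.mem_offDiag.mp hpq
    measurableSet_le (measurable_empDistSeq (hmeas _ hp _ hq)) measurable_const

lemma card_mul_measure_pi_compl_le_lintegral_coverNum (hPH : ↑P ⊆ H)
    (hmeas : ∀ p ∈ P, ∀ q ∈ P, MeasurableSet {x | p x ≠ q x}) (m : ℕ) :
    P.card * Measure.pi (fun _ : Fin m => μ)
        (⋃ pq ∈ P.offDiag, {ω | empDistSeq ω pq.1 pq.2 ≤ ε})ᶜ ≤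
      ∫⁻ ω : Fin m → X, (coverNum (empDistSeq ω) (ε / 2) H : ℝ≥0∞) ∂(Measure.pi fun _ => μ) := by
  rw [← lintegral_indicator_const (measurableSet_biUnion_empDistSeq_le hmeas m).compl]
  refine lintegral_mono fun ω => Set.indicator_apply_le' (fun hω => ?_) fun _ => zero_le
  have hsep : (P : Set (X → Y)).Pairwise fun p q => ε < empDistSeq ω p q := by
    intro p hp q hq hne
    simp only [Set.mem_compl_iff, Set.mem_iUnion, not_exists, Set.mem_ofPred_eq] at hω
    exact not_le.mp (hω (p, q) (Finset.mem_offDiag.mpr ⟨hp, hq, hne⟩))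
  have hcard := card_le_coverNum_of_pairwise_lt (empDistSeq_comm ω) (empDistSeq_triangle ω)
    (ε' := ε / 2) (by linarith) hPH hsep
  simpa using ENat.toENNReal_le.mpr hcard

variable [IsProbabilityMeasure μ]

lemma tendsto_measure_pi_biUnion_empDistSeq_le
    (hmeas : ∀ p ∈ P, ∀ q ∈ P, MeasurableSet {x | p x ≠ q x})
    (hP : (P : Set (X → Y)).Pairwise fun p q => ε < μ.real {x | p x ≠ q x}) :
    Tendsto (fun m : ℕ => Measure.pi (fun _ : Fin m => μ)
      (⋃ pq ∈ P.offDiag, {ω | empDistSeq ω pq.1 pq.2 ≤ ε})) atTop (𝓝 0) := by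
  have hpair : ∀ pq ∈ P.offDiag, Tendsto (fun m : ℕ => Measure.pi (fun _ : Fin m => μ)
      {ω | empDistSeq ω pq.1 pq.2 ≤ ε}) atTop (𝓝 0) := by
    intro pq hpq
    obtain ⟨hp, hq, hne⟩ := Finset.mem_offDiag.mp hpq
    simp_rw [empDistSeq_eq_mean_indicator]
    exact tendsto_measure_pi_mean_indicator_le μ (hmeas _ hp _ hq) (hP hp hq hne)
  refine tendsto_of_tendsto_of_tendsto_of_le_of_le tendsto_const_nhds ?_ (fun _ => zero_le)
    fun m => measure_biUnion_finset_le _ _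
  simpa using tendsto_finsetSum _ hpair

lemma card_le_iSup_lintegral_coverNum_empDistSeq (hPH : ↑P ⊆ H)
    (hmeas : ∀ p ∈ P, ∀ q ∈ P, MeasurableSet {x | p x ≠ q x})
    (hP : (P : Set (X → Y)).Pairwise fun p q => ε < μ.real {x | p x ≠ q x}) :
    (P.card : ℝ≥0∞) ≤ ⨆ m : ℕ, ∫⁻ ω : Fin m → X,
      (coverNum (empDistSeq ω) (ε / 2) H : ℝ≥0∞) ∂(Measure.pi fun _ => μ) := by
  have hgood : Tendsto (fun m : ℕ => P.card * Measure.pi (fun _ : Fin m => μ)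
      (⋃ pq ∈ P.offDiag, {ω | empDistSeq ω pq.1 pq.2 ≤ ε})ᶜ) atTop (𝓝 (P.card * (1 - 0))) := by
    simp_rw [prob_compl_eq_one_sub (measurableSet_biUnion_empDistSeq_le hmeas _)]
    exact ENNReal.Tendsto.const_mul (ENNReal.Tendsto.sub tendsto_const_nhds
      (tendsto_measure_pi_biUnion_empDistSeq_le μ hmeas hP) (Or.inl one_ne_top))
      (Or.inr (natCast_ne_top _))
  rw [tsub_zero, mul_one] at hgood
  exact le_of_tendsto' hgood fun m =>
    (card_mul_measure_pi_compl_le_lintegral_coverNum μ hPH hmeas m).trans (le_iSup_of_le m le_rfl)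

end EmpiricalCovering

/-- UBEME implies bounded metric entropy with respect to `μ`:
`N(ε, H, d_μ) ≤ sup_m E_{x₁,…,x_m ∼ μ^m}[N(ε/2, H, d_{μ̂_m})]`. -/
theorem coverNum_population_le_sup_expected_empirical {X Y : Type*} [MeasurableSpace X]
    [DecidableEq Y] (μ : Measure X) [IsProbabilityMeasure μ] (H : Set (X → Y))
    (hmeas : ∀ h₁ ∈ H, ∀ h₂ ∈ H, MeasurableSet {x | h₁ x ≠ h₂ x})
    {ε : ℝ} (hε : 0 < ε) :
    (coverNum (fun h₁ h₂ => (μ {x | h₁ x ≠ h₂ x}).toReal) ε H : ℝ≥0∞) ≤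
      ⨆ m : ℕ, ∫⁻ ω : Fin m → X,
        (coverNum (empDistSeq ω) (ε / 2) H : ℝ≥0∞) ∂(Measure.pi fun _ => μ) := by
  have hpack := coverNum_le_packNum (d := fun h₁ h₂ => (μ {x | h₁ x ≠ h₂ x}).toReal) (A := H)
    (fun _ => by simpa using hε.le) (fun f g => by simp only [ne_comm])
  refine (ENat.toENNReal_le.mpr hpack).trans ?_
  rw [packNum, ENat.toENNReal_iSup]
  refine iSup_le fun ⟨P, hPH, hP⟩ => ?_
  rw [ENat.toENNReal_coe]
  exact card_le_iSup_lintegral_coverNum_empDistSeq μ hPH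
    (fun p hp q hq => hmeas p (hPH hp) q (hPH hq)) hP
end

section
/- The hypothesis class H = ⋃_{n∈ℕ} ⋃_{(x₁,…,xₙ) distinct} ⋃_{θ∈{0,1}ⁿ} {h^θ_{(x₁,…,xₙ)}}, where h^θ_{(x₁,…,xₙ)}(x) = ((x₁,…,xₙ), θ_{≤t}) if x = x_t and ((x₁,…,xₙ), ⋆) otherwise, admits a sample compression scheme of size 1: there exist functions κ mapping any H-realizable labeled sample S to a single element of S, and ρ mapping a single labeled example to a hypothesis in H, such that ρ(κ(S)) agrees with the sample labels on every point of S. -/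
open Classical

/-- Labels: a tuple of points (a list of reals) together with either a binary-string
prefix (`some`) or the symbol ⋆ (`none`). -/
abbrev YL := List ℝ × Option (List Bool)

open Classical in
/-- The hypothesis `h^θ_{(z₁,…,z_m)}`: on `z_t` it outputs `((z₁,…,z_m), θ_{≤t})`, and
elsewhere it outputs `((z₁,…,z_m), ⋆)`. -/
noncomputable def hypL (z : List ℝ) (θ : List Bool) (v : ℝ) : YL :=
  if v ∈ z then (z, some (θ.take (z.idxOf v + 1))) else (z, none)

/-- The hypothesis class of all `h^θ_{(z₁,…,z_m)}` over finite sequences of distinct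
points `z` and binary strings `θ` of matching length. -/
def HL : Set (ℝ → YL) :=
  {f | ∃ z : List ℝ, ∃ θ : List Bool, z.Nodup ∧ θ.length = z.length ∧ f = hypL z θ}

/-! All labels of a realizable sample share the tuple `z` and carry prefixes `θ.take (t + 1)` of
one string `θ`. The example with the longest prefix therefore fixes every label of the sample, and
padding its prefix to length `z.length` yields a hypothesis of `HL` reproducing them all. -/

/-- `⋆` is read as the empty prefix. -/
def labelPrefix (y : YL) : List Bool := y.2.getD []

def prefixLength (p : ℝ × YL) : ℕ := (labelPrefix p.2).length

noncomputable def compress (S : List (ℝ × YL)) : ℝ × YL :=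
  (S.argmax prefixLength).getD default

noncomputable def reconstruct (y : YL) : ℝ → YL :=
  hypL y.1 ((labelPrefix y).rightpad y.1.length false)

theorem hypL_fst (z : List ℝ) (θ : List Bool) (v : ℝ) : (hypL z θ v).1 = z := by
  unfold hypL; split_ifs <;> rfl

theorem labelPrefix_hypL_prefix (z : List ℝ) (θ : List Bool) (v : ℝ) :
    labelPrefix (hypL z θ v) <+: θ := by
  unfold hypL labelPrefix; split_ifs
  · exact List.take_prefix _ θ
  · exact List.nil_prefix

theorem idxOf_lt_length_labelPrefix_hypL {z : List ℝ} {θ : List Bool} {v : ℝ} (hv : v ∈ z)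
    (hθ : z.length ≤ θ.length) : z.idxOf v < (labelPrefix (hypL z θ v)).length := by
  have := List.idxOf_lt_length_iff.mpr hv
  simp only [hypL, if_pos hv, labelPrefix, Option.getD_some, List.length_take]
  omega

theorem hypL_append_eq_of_prefix {z : List ℝ} {θ w : List Bool} {v : ℝ} (hw : w <+: θ)
    (hv : v ∈ z → z.idxOf v < w.length) (r : List Bool) : hypL z (w ++ r) v = hypL z θ v := by
  unfold hypL
  split_ifs with hvz
  · rw [List.take_append_of_le_length (hv hvz), List.prefix_iff_eq_take.mp hw, List.take_take,
      min_eq_left (hv hvz)]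
  · rfl

theorem hypL_rightpad_mem_HL {z : List ℝ} {w : List Bool} (hz : z.Nodup)
    (hw : w.length ≤ z.length) (b : Bool) : hypL z (w.rightpad z.length b) ∈ HL :=
  ⟨z, _, hz, by rw [List.length_rightpad, max_eq_left hw], rfl⟩

theorem compress_mem {S : List (ℝ × YL)} (hS : S ≠ []) : compress S ∈ S := by
  obtain ⟨m, hm⟩ :=
    Option.ne_none_iff_exists'.mp (mt (List.argmax_eq_none (f := prefixLength)).mp hS)
  rw [compress, hm, Option.getD_some]
  exact List.argmax_mem hm

theorem prefixLength_le_compress {S : List (ℝ × YL)} {p : ℝ × YL} (hp : p ∈ S) :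
    prefixLength p ≤ prefixLength (compress S) := by
  obtain ⟨m, hm⟩ := Option.ne_none_iff_exists'.mp
    (mt (List.argmax_eq_none (f := prefixLength)).mp (List.ne_nil_of_mem hp))
  rw [compress, hm, Option.getD_some]
  exact List.le_of_mem_argmax hp hm

/-- `HL` admits a sample compression scheme of size `1`: a compression map `κ`
selecting a single labeled example from any nonempty realizable sample, and a
reconstruction map `ρ` producing a hypothesis in `HL` that agrees with all the
labels of the sample. -/
theorem HL_compression_size_one :
    ∃ (κ : List (ℝ × YL) → ℝ × YL) (ρ : ℝ × YL → (ℝ → YL)),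
      ∀ S : List (ℝ × YL), S ≠ [] → (∃ f ∈ HL, ∀ p ∈ S, f p.1 = p.2) →
        κ S ∈ S ∧ ρ (κ S) ∈ HL ∧ ∀ p ∈ S, ρ (κ S) p.1 = p.2 := by
  refine ⟨compress, fun p => reconstruct p.2, ?_⟩
  rintro S hS ⟨f, ⟨z, θ, hz, hθ, rfl⟩, hf⟩
  have hm : compress S ∈ S := compress_mem hS
  have hmz : (compress S).2.1 = z := by rw [← hf _ hm, hypL_fst]
  have hprefix : labelPrefix (compress S).2 <+: θ := hf _ hm ▸ labelPrefix_hypL_prefix z θ _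
  refine ⟨hm, ?_, fun p hp => ?_⟩
  · dsimp only [reconstruct]
    rw [hmz]
    exact hypL_rightpad_mem_HL hz (hprefix.length_le.trans hθ.le) false
  · dsimp only [reconstruct]
    rw [hmz, List.rightpad, hypL_append_eq_of_prefix hprefix, hf p hp]
    intro hv
    calc z.idxOf p.1 < (labelPrefix (hypL z θ p.1)).length :=
          idxOf_lt_length_labelPrefix_hypL hv hθ.ge
      _ = prefixLength p := by rw [prefixLength, hf p hp]
      _ ≤ prefixLength (compress S) := prefixLength_le_compress hp
end
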